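/- arXiv:2211.13917 — 2 statements merged into one kernel-verified Lean document; each statement's English description precedes it below -/
import Mathlib

section
/- If 2r/σ² < 1 and L > 0, then g(1) = (2r/σ² + L(1 − 2r/σ²))(p₁ − p₂) > 0 and g(L) = p₁ L^{p₂} − p₂ L^{p₁} > 0. -/
open Real

/-- The function `g` of the statement, with its parameters made explicit. -/
noncomputable def gFun (α L p₁ p₂ y : ℝ) : ℝ :=
  (α + 1) * (p₁ * y ^ p₂ - p₂ * y ^ p₁)
    - α * L * (p₁ * y ^ (p₂ - 1) - p₂ * y ^ (p₁ - 1))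
    - p₁ * p₂ * (y - L) * (y ^ (p₂ - 1) - y ^ (p₁ - 1))

lemma abs_lt_sqrt_sq_add {b d : ℝ} (hd : 0 < d) : |b| < √(b ^ 2 + d) := by
  rw [← sqrt_sq_eq_abs]
  exact sqrt_lt_sqrt (sq_nonneg b) (lt_add_of_pos_right _ hd)

lemma gFun_one (α L p₁ p₂ : ℝ) : gFun α L p₁ p₂ 1 = (α + 1 - α * L) * (p₁ - p₂) := by
  simp only [gFun, one_rpow]
  ring

/-- At `y = L` the last term vanishes and `L ^ (p - 1) = L ^ p / L` cancels the factor `L`. -/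
lemma gFun_self (α p₁ p₂ : ℝ) {L : ℝ} (hL : L ≠ 0) :
    gFun α L p₁ p₂ L = p₁ * L ^ p₂ - p₂ * L ^ p₁ := by
  simp only [gFun, rpow_sub_one hL]
  field_simp
  ring

lemma mul_rpow_sub_mul_rpow_pos {p₁ p₂ L : ℝ} (hp₁ : 0 < p₁) (hp₂ : p₂ < 0) (hL : 0 < L) :
    0 < p₁ * L ^ p₂ - p₂ * L ^ p₁ := by
  have h₁ : 0 < p₁ * L ^ p₂ := mul_pos hp₁ (rpow_pos_of_pos hL _)
  have h₂ : p₂ * L ^ p₁ < 0 := mul_neg_of_neg_of_pos hp₂ (rpow_pos_of_pos hL _)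
  linarith

/-- If `2r/σ² < 1` and `L > 0`, then
`g(1) = (2r/σ² + L(1 − 2r/σ²))(p₁ − p₂) > 0` and `g(L) = p₁ L^(p₂) − p₂ L^(p₁) > 0`. -/
theorem stmt_7 (r σ lam α p₁ p₂ L : ℝ) (g : ℝ → ℝ)
    (hr : 0 < r) (hσ : 0 < σ) (hlam : 0 < lam)
    (hα : α = 2*r/σ^2 - 1)
    (hp₁ : p₁ = ((r + σ^2/2) + Real.sqrt ((r + σ^2/2)^2 + 2*lam*σ^2)) / σ^2)
    (hp₂ : p₂ = ((r + σ^2/2) - Real.sqrt ((r + σ^2/2)^2 + 2*lam*σ^2)) / σ^2)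
    (hdrift : 2*r/σ^2 < 1) (hL : 0 < L)
    (hg : ∀ y : ℝ, g y = (α+1) * (p₁ * y^p₂ - p₂ * y^p₁)
      - α * L * (p₁ * y^(p₂-1) - p₂ * y^(p₁-1))
      - p₁ * p₂ * (y - L) * (y^(p₂-1) - y^(p₁-1))) :
    (g 1 = (2*r/σ^2 + L * (1 - 2*r/σ^2)) * (p₁ - p₂) ∧ 0 < g 1) ∧
    (g L = p₁ * L^p₂ - p₂ * L^p₁ ∧ 0 < g L) := by
  obtain rfl : g = gFun α L p₁ p₂ := funext hg
  have hσ2 : 0 < σ ^ 2 := by positivity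
  obtain ⟨hsqrt_lo, hsqrt_hi⟩ :=
    abs_lt.mp (abs_lt_sqrt_sq_add (b := r + σ ^ 2 / 2) (by positivity : 0 < 2 * lam * σ ^ 2))
  have hp₁pos : 0 < p₁ := hp₁ ▸ div_pos (by linarith) hσ2
  have hp₂neg : p₂ < 0 := hp₂ ▸ div_neg_of_neg_of_pos (by linarith) hσ2
  have hg1 : gFun α L p₁ p₂ 1 = (2*r/σ^2 + L * (1 - 2*r/σ^2)) * (p₁ - p₂) := by
    rw [gFun_one, hα]
    ring
  have hweight : 0 < 2*r/σ^2 + L * (1 - 2*r/σ^2) :=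
    add_pos (by positivity) (mul_pos hL (sub_pos.mpr hdrift))
  refine ⟨⟨hg1, hg1 ▸ mul_pos hweight (by linarith)⟩, gFun_self α p₁ p₂ hL.ne', ?_⟩
  rw [gFun_self α p₁ p₂ hL.ne']
  exact mul_rpow_sub_mul_rpow_pos hp₁pos hp₂neg hL
end

section
/- Suppose r < σ²/2 (so that α < 0). Then for each fixed y ≥ 1 the map t ↦ Z(t, y) is decreasing on [0, T), and for each fixed t ∈ [0, T) the map y ↦ Z(t, y) is decreasing on [1, ∞). -/
/-- The standard normal cumulative distribution function
`Φ(x) = (1/√(2π)) ∫_{−∞}^x e^(−z²/2) dz`. -/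
noncomputable def stdNormalCDF (x : ℝ) : ℝ :=
  (Real.sqrt (2*Real.pi))⁻¹ * ∫ z in Set.Iic x, Real.exp (-z^2/2)

/-- `Z(t, y) = Φ((−log y + (r − σ²/2)(T − t))/(σ√(T − t)))
             + y^α Φ((−log y − (r − σ²/2)(T − t))/(σ√(T − t)))`. -/
noncomputable def Zfun (r σ T α t y : ℝ) : ℝ :=
  stdNormalCDF ((-Real.log y + (r - σ^2/2)*(T - t)) / (σ * Real.sqrt (T - t)))
    + y^α * stdNormalCDF ((-Real.log y - (r - σ^2/2)*(T - t)) / (σ * Real.sqrt (T - t)))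

noncomputable def npdf (x : ℝ) : ℝ := (Real.sqrt (2*Real.pi))⁻¹ * Real.exp (-x^2/2)

lemma npdf_pos (x : ℝ) : 0 < npdf x :=
  mul_pos (inv_pos.mpr (Real.sqrt_pos.mpr (by positivity))) (Real.exp_pos _)

lemma gauss_integrable : MeasureTheory.Integrable (fun z : ℝ => Real.exp (-z^2/2)) := by
  have := integrable_exp_neg_mul_sq (b := (1/2:ℝ)) (by norm_num)
  convert this using 2 with z
  ring_nf

lemma stdNormalCDF_nonneg (x : ℝ) : 0 ≤ stdNormalCDF x :=
  mul_nonneg (inv_nonneg.mpr (Real.sqrt_nonneg _))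
    (MeasureTheory.integral_nonneg (fun z => (Real.exp_pos _).le))

lemma hasDerivAt_stdNormalCDF (x : ℝ) : HasDerivAt stdNormalCDF (npdf x) x := by
  have hint := gauss_integrable
  have hcdf : ∀ b : ℝ, stdNormalCDF b = (Real.sqrt (2*Real.pi))⁻¹ *
      ((∫ z in Set.Iic 0, Real.exp (-z^2/2)) + ∫ z in (0:ℝ)..b, Real.exp (-z^2/2)) := by
    intro b
    unfold stdNormalCDF
    rw [← intervalIntegral.integral_Iic_sub_Iic hint.integrableOn hint.integrableOn]
    ring
  have h1 : HasDerivAt (fun b => ∫ z in (0:ℝ)..b, Real.exp (-z^2/2))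
      (Real.exp (-x^2/2)) x := by
    apply intervalIntegral.integral_hasDerivAt_right hint.intervalIntegrable
    · exact Continuous.stronglyMeasurableAtFilter (by continuity) _ _
    · exact (by continuity : Continuous fun z : ℝ => Real.exp (-z^2/2)).continuousAt
  have h2 := ((h1.const_add (∫ z in Set.Iic 0, Real.exp (-z^2/2))).const_mul
      (Real.sqrt (2*Real.pi))⁻¹)
  apply h2.congr_of_eventuallyEq
  filter_upwards with b
  rw [hcdf b]

lemma continuous_stdNormalCDF : Continuous stdNormalCDF :=
  Differentiable.continuous fun x => (hasDerivAt_stdNormalCDF x).differentiableAt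

lemma npdf_shift {u v c : ℝ} (h : u^2 - v^2 = -2*c) : npdf u = Real.exp c * npdf v := by
  unfold npdf
  rw [mul_comm (Real.exp c), mul_assoc, ← Real.exp_add]
  have : -u^2/2 = -v^2/2 + c := by linarith
  rw [this]

/-- If `r < σ²/2` (so `α < 0`), then for each fixed `y ≥ 1` the
map `t ↦ Z(t, y)` is decreasing on `[0, T)`, and for each fixed `t ∈ [0, T)`
the map `y ↦ Z(t, y)` is decreasing on `[1, ∞)`. -/
theorem stmt_13 (r σ T α : ℝ) (hr : 0 < r) (hσ : 0 < σ) (hT : 0 < T)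
    (hα : α = 2*r/σ^2 - 1) (hdrift : r < σ^2/2) :
    (∀ y : ℝ, 1 ≤ y → AntitoneOn (fun t => Zfun r σ T α t y) (Set.Ico 0 T)) ∧
    (∀ t ∈ Set.Ico (0:ℝ) T, AntitoneOn (fun y => Zfun r σ T α t y) (Set.Ici 1)) := by
  have hσ2 : (0:ℝ) < σ^2 := by positivity
  have hα0 : α < 0 := by
    rw [hα, sub_neg]
    rw [div_lt_one hσ2]
    linarith
  constructor
  · -- antitone in t
    intro y hy
    have hy0 : (0:ℝ) < y := lt_of_lt_of_le one_pos hy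
    have ha : 0 ≤ Real.log y := Real.log_nonneg hy
    -- key derivative fact
    have key : ∀ t ∈ Set.Ioo (0:ℝ) T, ∃ D, D ≤ 0 ∧
        HasDerivAt (fun t => Zfun r σ T α t y) D t := by
      intro t ht
      have hτ : 0 < T - t := sub_pos.mpr ht.2
      have hsq : 0 < Real.sqrt (T - t) := Real.sqrt_pos.mpr hτ
      have hsq2 : Real.sqrt (T - t) ^ 2 = T - t := Real.sq_sqrt hτ.le
      have hs : σ * Real.sqrt (T - t) ≠ 0 := by positivity
      have hTt : HasDerivAt (fun t : ℝ => T - t) (-1) t := (hasDerivAt_id t).const_sub T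
      have hS : HasDerivAt (fun t : ℝ => Real.sqrt (T - t))
          (1 / (2 * Real.sqrt (T - t)) * (-1)) t :=
        (Real.hasDerivAt_sqrt hτ.ne').comp t hTt
      have hDen : HasDerivAt (fun t : ℝ => σ * Real.sqrt (T - t))
          (σ * (1 / (2 * Real.sqrt (T - t)) * (-1))) t := hS.const_mul σ
      have hNum1 : HasDerivAt (fun t : ℝ => -Real.log y + (r - σ^2/2)*(T - t))
          ((r - σ^2/2) * (-1)) t := (hTt.const_mul (r - σ^2/2)).const_add (-Real.log y)
      have hNum2 : HasDerivAt (fun t : ℝ => -Real.log y - (r - σ^2/2)*(T - t))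
          (-((r - σ^2/2) * (-1))) t := (hTt.const_mul (r - σ^2/2)).const_sub (-Real.log y)
      have hu := hNum1.div hDen hs
      have hv := hNum2.div hDen hs
      have hZ := ((hasDerivAt_stdNormalCDF _).comp t hu).add
        (((hasDerivAt_stdNormalCDF _).comp t hv).const_mul (y^α))
      refine ⟨_, ?_, hZ⟩
      set sq := Real.sqrt (T - t) with hsqdef
      set U := ((r - σ^2/2) * (-1) * (σ * sq) -
        (-Real.log y + (r - σ^2/2)*(T - t)) * (σ * (1 / (2 * sq) * (-1)))) / (σ * sq)^2 with hU
      set V := (-((r - σ^2/2) * (-1)) * (σ * sq) -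
        (-Real.log y - (r - σ^2/2)*(T - t)) * (σ * (1 / (2 * sq) * (-1)))) / (σ * sq)^2 with hV
      -- identity npdf u = y^α * npdf v
      have hid : ((-Real.log y + (r - σ^2/2)*(T - t)) / (σ * sq))^2
          - ((-Real.log y - (r - σ^2/2)*(T - t)) / (σ * sq))^2 = -2*(α * Real.log y) := by
        rw [hα, ← hsq2]
        field_simp
        ring
      have hnp : npdf ((-Real.log y + (r - σ^2/2)*(T - t)) / (σ * sq))
          = y^α * npdf ((-Real.log y - (r - σ^2/2)*(T - t)) / (σ * sq)) := by
        rw [npdf_shift hid, Real.rpow_def_of_pos hy0, mul_comm α]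
      have hUV : U + V = (-(Real.log y * σ / sq)) / (σ * sq)^2 := by
        rw [hU, hV, ← add_div]
        congr 1
        field_simp
        ring
      have hUVle : U + V ≤ 0 := by
        rw [hUV]
        apply div_nonpos_of_nonpos_of_nonneg
        · have : 0 ≤ Real.log y * σ / sq := by positivity
          linarith
        · positivity
      have hyα : 0 < y^α := Real.rpow_pos_of_pos hy0 α
      calc npdf ((-Real.log y + (r - σ^2/2)*(T - t)) / (σ * sq)) * U
            + y^α * (npdf ((-Real.log y - (r - σ^2/2)*(T - t)) / (σ * sq)) * V)
          = y^α * npdf ((-Real.log y - (r - σ^2/2)*(T - t)) / (σ * sq)) * (U + V) := by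
            rw [hnp]; ring
        _ ≤ 0 := mul_nonpos_of_nonneg_of_nonpos
            (mul_nonneg (Real.rpow_pos_of_pos hy0 α).le (npdf_pos _).le) hUVle
    have hcont : ContinuousOn (fun t => Zfun r σ T α t y) (Set.Ico 0 T) := by
      have hden : ∀ t ∈ Set.Ico (0:ℝ) T, σ * Real.sqrt (T - t) ≠ 0 := by
        intro t ht
        have : 0 < T - t := sub_pos.mpr ht.2
        positivity
      unfold Zfun
      apply ContinuousOn.add
      · exact continuous_stdNormalCDF.comp_continuousOn
          (ContinuousOn.div (by fun_prop) (by fun_prop) hden)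
      · exact ContinuousOn.mul continuousOn_const (continuous_stdNormalCDF.comp_continuousOn
          (ContinuousOn.div (by fun_prop) (by fun_prop) hden))
    apply antitoneOn_of_deriv_nonpos (convex_Ico 0 T) hcont
    · rw [interior_Ico]
      intro t ht
      obtain ⟨D, _, hD⟩ := key t ht
      exact hD.differentiableAt.differentiableWithinAt
    · rw [interior_Ico]
      intro t ht
      obtain ⟨D, hDle, hD⟩ := key t ht
      rw [hD.deriv]
      exact hDle
  · -- antitone in y
    intro t ht
    have hτ : 0 < T - t := sub_pos.mpr ht.2
    have hsq : 0 < Real.sqrt (T - t) := Real.sqrt_pos.mpr hτ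
    have hs : (0:ℝ) < σ * Real.sqrt (T - t) := by positivity
    have key : ∀ y ∈ Set.Ioi (1:ℝ), ∃ D, D ≤ 0 ∧
        HasDerivAt (fun y => Zfun r σ T α t y) D y := by
      intro y hy
      have hy0 : (0:ℝ) < y := lt_trans one_pos hy
      have hlog : HasDerivAt Real.log y⁻¹ y := Real.hasDerivAt_log hy0.ne'
      have hu : HasDerivAt (fun y : ℝ => (-Real.log y + (r - σ^2/2)*(T - t))
          / (σ * Real.sqrt (T - t))) (-y⁻¹ / (σ * Real.sqrt (T - t))) y :=
        (hlog.neg.add_const _).div_const _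
      have hv : HasDerivAt (fun y : ℝ => (-Real.log y - (r - σ^2/2)*(T - t))
          / (σ * Real.sqrt (T - t))) (-y⁻¹ / (σ * Real.sqrt (T - t))) y :=
        (hlog.neg.sub_const _).div_const _
      have hpow : HasDerivAt (fun y : ℝ => y^α) (α * y^(α-1)) y :=
        Real.hasDerivAt_rpow_const (Or.inl hy0.ne')
      have hZ := ((hasDerivAt_stdNormalCDF _).comp y hu).add
        (hpow.mul ((hasDerivAt_stdNormalCDF _).comp y hv))
      refine ⟨_, ?_, hZ⟩
      have h1 : npdf ((-Real.log y + (r - σ^2/2)*(T - t)) / (σ * Real.sqrt (T - t)))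
          * (-y⁻¹ / (σ * Real.sqrt (T - t))) ≤ 0 := by
        apply mul_nonpos_of_nonneg_of_nonpos (npdf_pos _).le
        apply div_nonpos_of_nonpos_of_nonneg _ hs.le
        simp [hy0.le]
      have h2 : α * y^(α-1) * stdNormalCDF ((-Real.log y - (r - σ^2/2)*(T - t))
          / (σ * Real.sqrt (T - t))) ≤ 0 := by
        apply mul_nonpos_of_nonpos_of_nonneg _ (stdNormalCDF_nonneg _)
        exact mul_nonpos_of_nonpos_of_nonneg hα0.le (Real.rpow_pos_of_pos hy0 _).le
      have h3 : y^α * (npdf ((-Real.log y - (r - σ^2/2)*(T - t)) / (σ * Real.sqrt (T - t)))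
          * (-y⁻¹ / (σ * Real.sqrt (T - t)))) ≤ 0 := by
        apply mul_nonpos_of_nonneg_of_nonpos (Real.rpow_pos_of_pos hy0 _).le
        apply mul_nonpos_of_nonneg_of_nonpos (npdf_pos _).le
        apply div_nonpos_of_nonpos_of_nonneg _ hs.le
        simp [hy0.le]
      simp only [Function.comp_apply]
      linarith
    have hcont : ContinuousOn (fun y => Zfun r σ T α t y) (Set.Ici 1) := by
      intro y hy
      have hy0 : (0:ℝ) < y := lt_of_lt_of_le one_pos hy
      apply ContinuousAt.continuousWithinAt
      unfold Zfun
      apply ContinuousAt.add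
      · apply continuous_stdNormalCDF.continuousAt.comp
        exact (((Real.continuousAt_log hy0.ne').neg.add continuousAt_const).div_const _)
      · apply ContinuousAt.mul
        · exact Real.continuousAt_rpow_const y α (Or.inl hy0.ne')
        · apply continuous_stdNormalCDF.continuousAt.comp
          exact (((Real.continuousAt_log hy0.ne').neg.sub continuousAt_const).div_const _)
    apply antitoneOn_of_deriv_nonpos (convex_Ici 1) hcont
    · rw [interior_Ici]
      intro y hy
      obtain ⟨D, _, hD⟩ := key y hy
      exact hD.differentiableAt.differentiableWithinAt
    · rw [interior_Ici]
      intro y hy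
      obtain ⟨D, hDle, hD⟩ := key y hy
      rw [hD.deriv]
      exact hDle
end
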